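/- arXiv:2505.05922 — 3 statements merged into one kernel-verified Lean document; each statement's English description precedes it below -/
import Mathlib

section
/- Let V be a finite nonempty set (the vocabulary), let ε > 0 and Δ > 0, and let u : V × V → ℝ be a utility function whose sensitivity is bounded by Δ, i.e. |u(t,y) − u(t',y)| ≤ Δ for all t, t', y ∈ V. For every input token t ∈ V let B_t be a partition of V into nonempty buckets on which the utility u(t,·) is constant (B_t(y) = B_t(y') implies u(t,y) = u(t,y'), where B_t(y) denotes the bucket of the partition B_t containing y). Suppose there is M ≥ 1 such that the cardinalities of any two buckets (across all inputs) satisfy |b| / |b'| ≤ M, and set ε' = ln M. Define the bucketized Exponential Mechanism output weight P(t,y) = [ exp((ε/(2Δ))·u(t,y)) / Σ_{y'∈V} exp((ε/(2Δ))·u(t,y')) ] · (1 / |B_t(y)|). Then for all t, t', y ∈ V one has P(t,y) ≤ exp(ε + ε') · P(t',y); that is, the bucketized Exponential Mechanism satisfies (ε + ε')-differential privacy. -/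
/-- The bucketized Exponential Mechanism satisfies (ε + ε')-differential privacy,
where ε' = ln M bounds the log-ratio of bucket cardinalities. -/
theorem bucketized_exponential_mechanism_dp
    {V : Type*} [Fintype V] [Nonempty V]
    (ε Δ : ℝ) (hε : 0 < ε) (hΔ : 0 < Δ)
    (u : V → V → ℝ)
    (hsens : ∀ t t' y : V, |u t y - u t' y| ≤ Δ)
    -- For every input t, `B t` is the bucket map: `B t y` is the bucket containing y.
    (B : V → V → Finset V)
    (hmem : ∀ t y : V, y ∈ B t y)
    -- Equivalence-class (partition) property: y' lies in the bucket of y iff the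
    -- buckets of y and y' coincide.
    (hpart : ∀ t y y' : V, y' ∈ B t y ↔ B t y' = B t y)
    -- The utility u(t,·) is constant on each bucket of the partition B_t.
    (hconst : ∀ t y y' : V, B t y = B t y' → u t y = u t y')
    -- Cardinalities of any two buckets (across all inputs) have ratio at most M ≥ 1.
    (M : ℝ) (hM : 1 ≤ M)
    (hratio : ∀ t t' y y' : V, ((B t y).card : ℝ) ≤ M * ((B t' y').card : ℝ))
    (ε' : ℝ) (hε' : ε' = Real.log M)
    -- Output weight of the bucketized Exponential Mechanism.
    (P : V → V → ℝ)
    (hP : ∀ t y : V, P t y =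
      Real.exp (ε / (2 * Δ) * u t y) /
        (∑ y' : V, Real.exp (ε / (2 * Δ) * u t y')) * (1 / ((B t y).card : ℝ))) :
    ∀ t t' y : V, P t y ≤ Real.exp (ε + ε') * P t' y := by

  intro t t' y
  set c : ℝ := ε / (2 * Δ) with hc
  have hcpos : 0 < c := by positivity
  have hcΔ : c * Δ = ε / 2 := by
    field_simp [hc]
    rw [hc, div_mul_eq_mul_div, div_mul_eq_mul_div, div_eq_iff (by positivity)]; ring
  -- positivity facts
  have hScard : ∀ s z : V, (0:ℝ) < ((B s z).card : ℝ) := by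
    intro s z
    exact_mod_cast Finset.card_pos.mpr ⟨z, hmem s z⟩
  have hSpos : ∀ s : V, (0:ℝ) < ∑ y' : V, Real.exp (c * u s y') := by
    intro s
    exact Finset.sum_pos (fun i _ => Real.exp_pos _) Finset.univ_nonempty
  have hexpstep : ∀ s s' z : V, Real.exp (c * u s z) ≤ Real.exp (ε/2) * Real.exp (c * u s' z) := by
    intro s s' z
    rw [← Real.exp_add]
    apply Real.exp_le_exp.2
    have h1 : u s z - u s' z ≤ Δ := (abs_le.1 (hsens s s' z)).2
    nlinarith
  have hsumstep : (∑ y' : V, Real.exp (c * u t' y')) ≤ Real.exp (ε/2) * ∑ y' : V, Real.exp (c * u t y') := by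
    rw [Finset.mul_sum]
    exact Finset.sum_le_sum fun i _ => hexpstep t' t i
  have hMexp : Real.exp ε' = M := by
    rw [hε', Real.exp_log (by linarith)]
  have hK : Real.exp (ε + ε') = Real.exp (ε/2) * Real.exp (ε/2) * M := by
    rw [← hMexp, ← Real.exp_add, ← Real.exp_add]
    ring_nf
  rw [hP t y, hP t' y]
  set a := Real.exp (c * u t y)
  set b := Real.exp (c * u t' y)
  set S := ∑ y' : V, Real.exp (c * u t y') with hS
  set S' := ∑ y' : V, Real.exp (c * u t' y') with hS'
  set n : ℝ := ((B t y).card : ℝ)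
  set n' : ℝ := ((B t' y).card : ℝ)
  have hnpos : 0 < n := hScard t y
  have hn'pos : 0 < n' := hScard t' y
  have hSp : 0 < S := hSpos t
  have hS'p : 0 < S' := hSpos t'
  have hab : a ≤ Real.exp (ε/2) * b := hexpstep t t' y
  have hnn : n' ≤ M * n := hratio t' t y y
  have h1 : a / S * (1 / n) = a / (S * n) := by
    field_simp
  have h2 : Real.exp (ε + ε') * (b / S' * (1 / n')) = Real.exp (ε + ε') * b / (S' * n') := by
    field_simp
  rw [h1, h2]
  rw [div_le_div_iff₀ (by positivity) (by positivity)]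
  have hbpos : (0:ℝ) < b := Real.exp_pos _
  have hapos : (0:ℝ) < a := Real.exp_pos _
  have hE : (0:ℝ) < Real.exp (ε/2) := Real.exp_pos _
  calc a * (S' * n') ≤ (Real.exp (ε/2) * b) * ((Real.exp (ε/2) * S) * (M * n)) := by
        apply mul_le_mul hab _ (by positivity) (by positivity)
        apply mul_le_mul hsumstep hnn (le_of_lt hn'pos) (by positivity)
    _ = Real.exp (ε + ε') * b * (S * n) := by rw [hK]; ring
end

section
/- Let V be a finite nonempty set, let c ≥ 0 and Δ ≥ 0 with c·Δ well-defined, and let u : V × V → ℝ satisfy |u(t,y) − u(t',y)| ≤ Δ for all t, t', y ∈ V. Then for all t, t' ∈ V, the normalizing sums of the Exponential Mechanism satisfy Σ_{y∈V} exp(c·u(t',y)) ≤ exp(c·Δ) · Σ_{y∈V} exp(c·u(t,y)). In particular, taking c = ε/(2Δ) with ε > 0 and Δ > 0, the ratio of normalizing constants Σ_{y} exp((ε/(2Δ))·u(t',y)) / Σ_{y} exp((ε/(2Δ))·u(t,y)) is at most exp(ε/2). -/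
/-- The normalizing sums of the Exponential Mechanism differ by a factor of at most
exp(c·Δ); in particular, for c = ε/(2Δ) the ratio of normalizing constants is at
most exp(ε/2). -/
theorem exponential_mechanism_normalizer_ratio
    {V : Type*} [Fintype V] [Nonempty V]
    (c Δ : ℝ) (hc : 0 ≤ c) (hΔ : 0 ≤ Δ)
    (u : V → V → ℝ)
    (hsens : ∀ t t' y : V, |u t y - u t' y| ≤ Δ) :
    (∀ t t' : V,
      (∑ y : V, Real.exp (c * u t' y)) ≤ Real.exp (c * Δ) * ∑ y : V, Real.exp (c * u t y))
    ∧
    (∀ ε : ℝ, 0 < ε → 0 < Δ → c = ε / (2 * Δ) →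
      ∀ t t' : V,
        (∑ y : V, Real.exp (c * u t' y)) / (∑ y : V, Real.exp (c * u t y))
          ≤ Real.exp (ε / 2)) := by
  have key : ∀ t t' : V,
      (∑ y : V, Real.exp (c * u t' y)) ≤ Real.exp (c * Δ) * ∑ y : V, Real.exp (c * u t y) := by
    intro t t'
    rw [Finset.mul_sum]
    apply Finset.sum_le_sum
    intro y _
    rw [← Real.exp_add]
    apply Real.exp_le_exp.mpr
    have h := (abs_le.mp (hsens t' t y)).2
    nlinarith [mul_le_mul_of_nonneg_left h hc]
  refine ⟨key, ?_⟩
  intro ε hε hΔ' hcΔ t t'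
  have hpos : 0 < ∑ y : V, Real.exp (c * u t y) :=
    Finset.sum_pos (fun y _ => Real.exp_pos _) Finset.univ_nonempty
  rw [div_le_iff₀ hpos]
  have : c * Δ = ε / 2 := by
    rw [hcΔ]; field_simp
  calc (∑ y : V, Real.exp (c * u t' y)) ≤ Real.exp (c * Δ) * ∑ y : V, Real.exp (c * u t y) := key t t'
    _ = Real.exp (ε / 2) * ∑ y : V, Real.exp (c * u t y) := by rw [this]
end

section
/- Let V be a finite nonempty set, ε > 0, Δ > 0, and u : V × V → ℝ with sensitivity bounded by Δ, i.e. |u(t,y) − u(t',y)| ≤ Δ for all t, t', y ∈ V. Define the Exponential Mechanism probability P(t,y) = exp((ε/(2Δ))·u(t,y)) / Σ_{y'∈V} exp((ε/(2Δ))·u(t,y')). Then for all t, t', y ∈ V one has P(t,y) ≤ exp(ε) · P(t',y); that is, the Exponential Mechanism satisfies ε-local differential privacy. -/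
/-- The Exponential Mechanism with utility of sensitivity Δ satisfies ε-local
differential privacy. -/
theorem exponential_mechanism_ldp
    {V : Type*} [Fintype V] [Nonempty V]
    (ε Δ : ℝ) (hε : 0 < ε) (hΔ : 0 < Δ)
    (u : V → V → ℝ)
    (hsens : ∀ t t' y : V, |u t y - u t' y| ≤ Δ)
    (P : V → V → ℝ)
    (hP : ∀ t y : V, P t y =
      Real.exp (ε / (2 * Δ) * u t y) /
        (∑ y' : V, Real.exp (ε / (2 * Δ) * u t y'))) :
    ∀ t t' y : V, P t y ≤ Real.exp ε * P t' y := by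
  intro t t' y
  set c : ℝ := ε / (2 * Δ) with hc
  have hcpos : 0 < c := div_pos hε (by linarith)
  have hcΔ : c * Δ = ε / 2 := by
    field_simp [hc]
    rw [hc, div_mul_eq_mul_div, div_mul_eq_mul_div, div_eq_iff (ne_of_gt (by linarith))]; ring
  -- pointwise numerator bound
  have key : ∀ a b y : V, Real.exp (c * u a y) ≤ Real.exp (ε / 2) * Real.exp (c * u b y) := by
    intro a b y
    rw [← Real.exp_add]
    apply Real.exp_le_exp.mpr
    have h1 : u a y - u b y ≤ Δ := (abs_le.mp (hsens a b y)).2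
    nlinarith [hcpos.le]
  have Spos : ∀ a : V, 0 < ∑ y' : V, Real.exp (c * u a y') := fun a =>
    Finset.sum_pos (fun _ _ => Real.exp_pos _) Finset.univ_nonempty
  have Sbound : ∀ a b : V, (∑ y' : V, Real.exp (c * u a y')) ≤
      Real.exp (ε / 2) * ∑ y' : V, Real.exp (c * u b y') := by
    intro a b
    rw [Finset.mul_sum]
    exact Finset.sum_le_sum fun y' _ => key a b y'
  rw [hP, hP, ← mul_div_assoc, div_le_div_iff₀ (Spos t) (Spos t'), mul_comm (Real.exp ε)]
  rw [mul_assoc]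
  calc Real.exp (c * u t y) * ∑ y' : V, Real.exp (c * u t' y')
      ≤ (Real.exp (ε / 2) * Real.exp (c * u t' y)) *
        (Real.exp (ε / 2) * ∑ y' : V, Real.exp (c * u t y')) := by
        apply mul_le_mul (key t t' y) (Sbound t' t) (Spos t').le
        positivity
    _ = Real.exp (c * u t' y) * (Real.exp ε * ∑ y' : V, Real.exp (c * u t y')) := by
        rw [show Real.exp ε = Real.exp (ε / 2) * Real.exp (ε / 2) by
          rw [← Real.exp_add]; ring_nf]
        ring
end
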